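/- Let (C, ∂) be a finite-dimensional chain complex over 𝔽_2 equipped with a chain involution τ (so τ² = id and τ∂ = ∂τ). Let K = 𝔽_2((θ)) be the field of formal Laurent series, and on C ⊗_{𝔽_2} K consider the differential D = ∂ + θ(1 + τ). Then dim_K H(C ⊗ K, D) ≤ dim_{𝔽_2} H(C, ∂). -/

import Mathlib

open scoped TensorProduct

set_option synthInstance.maxHeartbeats 1000000
set_option maxHeartbeats 2000000

/-- The field of formal Laurent series K = 𝔽₂((θ)) = 𝔽₂[[θ]][θ⁻¹], realized as
the fraction field of the formal power series ring over 𝔽₂. -/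
abbrev LaurentField : Type := FractionRing (PowerSeries (ZMod 2))

/-- The element θ of 𝔽₂((θ)). -/
noncomputable def thetaElt : LaurentField :=
  algebraMap (PowerSeries (ZMod 2)) LaurentField PowerSeries.X

/-!
Over a field the difference `dim ker − dim im` of an endomorphism of an `n`-dimensional space
is `n − 2 · rank`, so it suffices that `D = ∂ + θ (1 + τ)` has rank at least that of `∂`.
If `∂ pᵢ` are linearly independent over `𝔽₂`, so are the vectors `D pᵢ = ∂ pᵢ + θ (pᵢ + τ pᵢ)`
over `𝔽₂((θ))`: after clearing denominators and powers of `θ`, a relation among them would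
reduce modulo `θ` to a nontrivial relation among the `∂ pᵢ`.
-/

open PowerSeries

theorem PowerSeries.exists_eq_X_pow_mul_and_constantCoeff_ne_zero {R ι : Type*} [Semiring R]
    {g : ι → R⟦X⟧} (hg : g ≠ 0) :
    ∃ (m : ℕ) (d : ι → R⟦X⟧), (∀ i, g i = X ^ m * d i) ∧ ∃ i, constantCoeff (d i) ≠ 0 := by
  classical
  have hcoeff : ∃ n i, coeff n (g i) ≠ 0 := by
    by_contra! h
    exact hg (funext fun i => ext fun n => h n i)
  obtain ⟨i, hi⟩ := Nat.find_spec hcoeff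
  have hdvd (j : ι) : X ^ Nat.find hcoeff ∣ g j :=
    X_pow_dvd_iff.2 fun n hn => not_not.1 fun h => Nat.find_min hcoeff hn ⟨j, h⟩
  choose d hd using hdvd
  refine ⟨Nat.find hcoeff, d, hd, i, ?_⟩
  rw [← coeff_zero_eq_constantCoeff_apply, ← coeff_X_pow_mul _ (Nat.find hcoeff), zero_add,
    ← hd i]
  exact hi

theorem IsFractionRing.exists_eq_mul_algebraMap_and_constantCoeff_ne_zero
    {R K ι : Type*} [CommRing R] [IsDomain R] [Field K] [Algebra R⟦X⟧ K]
    [IsFractionRing R⟦X⟧ K] [Finite ι] {c : ι → K} (hc : c ≠ 0) :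
    ∃ (a : K) (d : ι → R⟦X⟧), (∀ i, c i = a * algebraMap R⟦X⟧ K (d i)) ∧
      ∃ i, constantCoeff (d i) ≠ 0 := by
  obtain ⟨b, hb⟩ := IsLocalization.exist_integer_multiples_of_finite (nonZeroDivisors R⟦X⟧) c
  choose g hg using hb
  have hb0 : algebraMap R⟦X⟧ K b ≠ 0 := IsFractionRing.to_map_ne_zero_of_mem_nonZeroDivisors b.2
  have hc_eq (i : ι) : c i = (algebraMap R⟦X⟧ K b)⁻¹ * algebraMap R⟦X⟧ K (g i) := by
    rw [hg i, Algebra.smul_def, inv_mul_cancel_left₀ hb0]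
  have hg0 : g ≠ 0 := by
    rintro rfl
    exact hc (funext fun i => by simp [hc_eq])
  obtain ⟨m, d, hd, hd0⟩ := PowerSeries.exists_eq_X_pow_mul_and_constantCoeff_ne_zero hg0
  refine ⟨(algebraMap R⟦X⟧ K b)⁻¹ * algebraMap R⟦X⟧ K (X ^ m), d, fun i => ?_, hd0⟩
  rw [hc_eq, hd, map_mul, mul_assoc]

section

variable {k K V : Type*} [Field k] [Field K] [Algebra k⟦X⟧ K] [IsFractionRing k⟦X⟧ K]
  [Algebra k K] [IsScalarTower k k⟦X⟧ K] [AddCommGroup V] [Module k V]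

theorem constantCoeff_eq_zero_of_sum_smul_tmul_add_X_tmul_eq_zero {ι : Type*} [Fintype ι]
    {v : ι → V} (hv : LinearIndependent k v) (w : ι → V) {d : ι → k⟦X⟧}
    (h : ∑ i, algebraMap k⟦X⟧ K (d i) •
      ((1 : K) ⊗ₜ[k] v i + algebraMap k⟦X⟧ K X ⊗ₜ[k] w i) = 0) (i : ι) :
    constantCoeff (d i) = 0 := by
  refine Fintype.linearIndependent_iff.1 hv (fun i => constantCoeff (d i)) ?_ i
  refine (Module.forall_dual_apply_eq_zero_iff k _).1 fun φ => ?_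
  have hΦ : algebraMap k⟦X⟧ K (∑ i, d i * (C (φ (v i)) + X * C (φ (w i)))) = 0 := by
    have := congrArg (φ.baseChange K) h
    simpa [map_sum, Algebra.smul_def, IsScalarTower.algebraMap_apply k k⟦X⟧ K, mul_comm,
      mul_add] using this
  have := congrArg constantCoeff ((map_eq_zero_iff _ (IsFractionRing.injective k⟦X⟧ K)).1 hΦ)
  simpa [map_sum] using this

theorem LinearIndependent.one_tmul_add_X_tmul {ι : Type*} [Finite ι] {v : ι → V}
    (hv : LinearIndependent k v) (w : ι → V) :
    LinearIndependent K fun i => (1 : K) ⊗ₜ[k] v i + algebraMap k⟦X⟧ K X ⊗ₜ[k] w i := by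
  have := Fintype.ofFinite ι
  refine Fintype.linearIndependent_iff.2 fun c hc => congrFun (?_ : c = 0)
  by_contra hc0
  obtain ⟨a, d, hcd, i, hi⟩ :=
    IsFractionRing.exists_eq_mul_algebraMap_and_constantCoeff_ne_zero (R := k) hc0
  have ha : a ≠ 0 := by
    rintro rfl
    exact hc0 (funext fun i => by simp [hcd])
  have hd : ∑ i, algebraMap k⟦X⟧ K (d i) •
      ((1 : K) ⊗ₜ[k] v i + algebraMap k⟦X⟧ K X ⊗ₜ[k] w i) = 0 := by
    have : a • ∑ i, algebraMap k⟦X⟧ K (d i) •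
        ((1 : K) ⊗ₜ[k] v i + algebraMap k⟦X⟧ K X ⊗ₜ[k] w i) = 0 := by
      simpa only [Finset.smul_sum, smul_smul, ← hcd] using hc
    simpa [ha] using this
  exact hi (constantCoeff_eq_zero_of_sum_smul_tmul_add_X_tmul_eq_zero hv w hd i)

theorem LinearMap.finrank_range_le_finrank_range_baseChange_add_X_smul
    {W : Type*} [AddCommGroup W] [Module k W] [FiniteDimensional k V] (f g : V →ₗ[k] W) :
    Module.finrank k (range f) ≤
      Module.finrank K (range (f.baseChange K + algebraMap k⟦X⟧ K X • g.baseChange K)) := by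
  set D := f.baseChange K + algebraMap k⟦X⟧ K X • g.baseChange K
  let b := Module.finBasis k (range f)
  choose p hp using fun i => (b i).2
  have hv : LinearIndependent k fun i => (b i : W) :=
    b.linearIndependent.map' _ (range f).ker_subtype
  have hDp (i : Fin _) : D ((1 : K) ⊗ₜ p i) =
      (1 : K) ⊗ₜ[k] (b i : W) + algebraMap k⟦X⟧ K X ⊗ₜ[k] g (p i) := by
    simp [D, hp, TensorProduct.smul_tmul', Algebra.smul_def]
  have hind :
      LinearIndependent K fun i => (⟨D ((1 : K) ⊗ₜ p i), mem_range_self _ _⟩ : range D) :=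
    .of_comp (range D).subtype (by simpa [Function.comp_def, hDp] using hv.one_tmul_add_X_tmul _)
  simpa using hind.fintype_card_le_finrank

end

theorem stmt_8_general (C : Type*) [AddCommGroup C] [Module (ZMod 2) C]
    [FiniteDimensional (ZMod 2) C]
    (del tau : C →ₗ[ZMod 2] C)
    (D : LaurentField ⊗[ZMod 2] C →ₗ[LaurentField] LaurentField ⊗[ZMod 2] C)
    (hD : D = LinearMap.baseChange LaurentField del
        + thetaElt • LinearMap.baseChange LaurentField (LinearMap.id + tau)) :
    (Module.finrank LaurentField (LinearMap.ker D) : ℤ)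
        - (Module.finrank LaurentField (LinearMap.range D) : ℤ)
      ≤ (Module.finrank (ZMod 2) (LinearMap.ker del) : ℤ)
        - (Module.finrank (ZMod 2) (LinearMap.range del) : ℤ) := by
  have hrank : Module.finrank (ZMod 2) (LinearMap.range del) ≤
      Module.finrank LaurentField (LinearMap.range D) := by
    rw [hD]
    exact LinearMap.finrank_range_le_finrank_range_baseChange_add_X_smul del (LinearMap.id + tau)
  have hdim : Module.finrank LaurentField (LaurentField ⊗[ZMod 2] C) =
      Module.finrank (ZMod 2) C := Module.finrank_baseChange
  have := LinearMap.finrank_range_add_finrank_ker D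
  have := LinearMap.finrank_range_add_finrank_ker del
  omega

/-- Rank inequality for the localization spectral sequence: for a
finite-dimensional chain complex (C, ∂) over 𝔽₂ with chain involution τ,
the homology of (C ⊗ 𝔽₂((θ)), D = ∂ + θ(1+τ)) over K = 𝔽₂((θ)) has dimension
at most dim_{𝔽₂} H(C, ∂).  (Since D² = 0 and ∂² = 0, the image of each
differential is contained in its kernel, and the dimension of the homology
ker/im is dim ker − dim im.) -/
theorem stmt_8 (C : Type*) [AddCommGroup C] [Module (ZMod 2) C]
    [FiniteDimensional (ZMod 2) C]
    (del tau : C →ₗ[ZMod 2] C)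
    (hdel : del ∘ₗ del = 0)
    (htau : tau ∘ₗ tau = LinearMap.id)
    (hcomm : del ∘ₗ tau = tau ∘ₗ del)
    (D : LaurentField ⊗[ZMod 2] C →ₗ[LaurentField] LaurentField ⊗[ZMod 2] C)
    (hD : D = LinearMap.baseChange LaurentField del
        + thetaElt • LinearMap.baseChange LaurentField (LinearMap.id + tau)) :
    (Module.finrank LaurentField (LinearMap.ker D) : ℤ)
        - (Module.finrank LaurentField (LinearMap.range D) : ℤ)
      ≤ (Module.finrank (ZMod 2) (LinearMap.ker del) : ℤ)
        - (Module.finrank (ZMod 2) (LinearMap.range del) : ℤ) :=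
  stmt_8_general C del tau D hD
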